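/- arXiv:1801.09311 — 6 statements merged into one kernel-verified Lean document; each statement's English description precedes it below -/
import Mathlib

section
/- Let (T, ≤) be a finite tree. Suppose given, for each non-maximal element t ∈ T, a total order on the set of immediate successors of t (a planar structure). Define a relation ⪯ on T by: e ⪯ f iff e = f, or (with e' and f' the unique elements below e and f respectively that are either equal or siblings, as in the sibling lemma) e' ⪯_v f' in the total order on the vertex containing them when e' ≠ f', or e ≤ f when e' = f'. Then ⪯ is a total order on T extending the partial order ≤. -/
/-!
Because down-sets are chains, a child `x` of `g` lying below `b` lies below every `h` with
`g < h ≤ b`. Hence the data `(g, e', f')` at which two incomparable elements diverge is unique,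
which gives antisymmetry. In a chain `a ⪯ b ⪯ c` of two divergences, both branch points lie below
`b` and are comparable: the lower one is a branch point of `a` and `c`, and if they coincide the
order on that vertex is transitive. Totality uses the greatest common lower bound, which exists
by finiteness.
-/

def IsForestOrder (T : Type*) [PartialOrder T] : Prop :=
  ∀ e s t : T, s ≤ e → t ≤ e → s ≤ t ∨ t ≤ s

variable {T : Type*} [PartialOrder T]

/-- The data `(g, e', f')` of the sibling lemma for `e` and `f`. -/
structure DivergeAt (g e' f' e f : T) : Prop where
  left_covBy : g ⋖ e'
  right_covBy : g ⋖ f'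
  ne : e' ≠ f'
  left_le : e' ≤ e
  right_le : f' ≤ f

theorem divergeAt_iff {g e' f' e f : T} :
    DivergeAt g e' f' e f ↔ g ⋖ e' ∧ g ⋖ f' ∧ e' ≠ f' ∧ e' ≤ e ∧ f' ≤ f :=
  ⟨fun ⟨h₁, h₂, h₃, h₄, h₅⟩ => ⟨h₁, h₂, h₃, h₄, h₅⟩, fun ⟨h₁, h₂, h₃, h₄, h₅⟩ => ⟨h₁, h₂, h₃, h₄, h₅⟩⟩

def planarLE (po : T → T → T → Prop) (e f : T) : Prop :=
  e ≤ f ∨ ∃ g e' f', DivergeAt g e' f' e f ∧ po g e' f'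

namespace DivergeAt

variable {g e' f' e f : T}

theorem symm (h : DivergeAt g e' f' e f) : DivergeAt g f' e' f e :=
  ⟨h.right_covBy, h.left_covBy, h.ne.symm, h.right_le, h.left_le⟩

theorem mono {e₂ f₂ : T} (h : DivergeAt g e' f' e f) (he : e' ≤ e₂) (hf : f' ≤ f₂) :
    DivergeAt g e' f' e₂ f₂ :=
  { h with left_le := he, right_le := hf }

theorem base_le_left (h : DivergeAt g e' f' e f) : g ≤ e :=
  h.left_covBy.le.trans h.left_le

theorem base_le_right (h : DivergeAt g e' f' e f) : g ≤ f :=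
  h.right_covBy.le.trans h.right_le

end DivergeAt

namespace IsForestOrder

variable {g x y b : T}

theorem covBy_le_of_lt (hT : IsForestOrder T) {h : T} (hx : g ⋖ x) (hxb : x ≤ b) (hgh : g < h)
    (hhb : h ≤ b) : x ≤ h :=
  (hT b x h hxb hhb).elim id fun hhx => ((hx.eq_or_eq hgh.le hhx).resolve_left hgh.ne').ge

theorem eq_of_covBy_of_le (hT : IsForestOrder T) (hx : g ⋖ x) (hy : g ⋖ y) (hxb : x ≤ b)
    (hyb : y ≤ b) : x = y :=
  le_antisymm (hT.covBy_le_of_lt hx hxb hy.lt hyb) (hT.covBy_le_of_lt hy hyb hx.lt hxb)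

theorem lt_trichotomy_of_le (hT : IsForestOrder T) (hx : x ≤ b) (hy : y ≤ b) :
    x < y ∨ x = y ∨ y < x := by
  rcases hT b x y hx hy with h | h
  · exact h.lt_or_eq.elim Or.inl (Or.inr ∘ Or.inl)
  · exact h.lt_or_eq.elim (Or.inr ∘ Or.inr) (Or.inr ∘ Or.inl ∘ Eq.symm)

end IsForestOrder

namespace DivergeAt

variable {g e' f' e f : T}

theorem left_not_le (h : DivergeAt g e' f' e f) (hT : IsForestOrder T) : ¬ e' ≤ f :=
  fun hef => h.ne (hT.eq_of_covBy_of_le h.left_covBy h.right_covBy hef h.right_le)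

theorem not_le (h : DivergeAt g e' f' e f) (hT : IsForestOrder T) : ¬ e ≤ f :=
  fun hef => h.left_not_le hT (h.left_le.trans hef)

theorem not_base_lt {g₂ e₂ f₂ : T} (h : DivergeAt g e' f' e f) (h₂ : DivergeAt g₂ e₂ f₂ e f)
    (hT : IsForestOrder T) : ¬ g < g₂ := fun hlt =>
  h.left_not_le hT <|
    (hT.covBy_le_of_lt h.left_covBy h.left_le hlt h₂.base_le_left).trans h₂.base_le_right

theorem unique {g₂ e₂ f₂ : T} (h : DivergeAt g e' f' e f) (h₂ : DivergeAt g₂ e₂ f₂ e f)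
    (hT : IsForestOrder T) : g = g₂ ∧ e' = e₂ ∧ f' = f₂ := by
  obtain rfl : g = g₂ := by
    rcases hT.lt_trichotomy_of_le h.base_le_left h₂.base_le_left with hlt | heq | hgt
    · exact absurd hlt (h.not_base_lt h₂ hT)
    · exact heq
    · exact absurd hgt (h₂.not_base_lt h hT)
  exact ⟨rfl, hT.eq_of_covBy_of_le h.left_covBy h₂.left_covBy h.left_le h₂.left_le,
    hT.eq_of_covBy_of_le h.right_covBy h₂.right_covBy h.right_le h₂.right_le⟩

end DivergeAt

theorem exists_divergeAt [Finite T] [IsCodirectedOrder T] {e f : T} (hef : ¬ e ≤ f)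
    (hfe : ¬ f ≤ e) : ∃ g e' f', DivergeAt g e' f' e f := by
  obtain ⟨g, ⟨hge, hgf⟩, hgmax⟩ :=
    (Set.toFinite {x : T | x ≤ e ∧ x ≤ f}).exists_maximal (exists_le_le e f)
  obtain ⟨e', hge', he'⟩ := exists_covBy_le_of_lt (hge.lt_of_ne (by rintro rfl; exact hef hgf))
  obtain ⟨f', hgf', hf'⟩ := exists_covBy_le_of_lt (hgf.lt_of_ne (by rintro rfl; exact hfe hge))
  refine ⟨g, e', f', hge', hgf', ?_, he', hf'⟩
  rintro rfl
  exact hge'.lt.not_ge (hgmax ⟨he', hf'⟩ hge'.le)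

section planarLE

variable {po : T → T → T → Prop} {a b c : T}

theorem planarLE_of_le (h : a ≤ b) : planarLE po a b :=
  Or.inl h

theorem planarLE_refl (a : T) : planarLE po a a :=
  planarLE_of_le le_rfl

theorem IsForestOrder.planarLE_of_le_of_divergeAt (hT : IsForestOrder T) {g e' f' : T}
    (hab : a ≤ b) (h : DivergeAt g e' f' b c) (hpo : po g e' f') : planarLE po a c := by
  rcases hT b a g hab h.base_le_left with hag | hga
  · exact Or.inl (hag.trans h.base_le_right)
  rcases hga.eq_or_lt with rfl | hlt
  · exact Or.inl h.base_le_right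
  · exact Or.inr ⟨g, e', f',
      h.mono (hT.covBy_le_of_lt h.left_covBy h.left_le hlt hab) h.right_le, hpo⟩

theorem IsForestOrder.planarLE_of_divergeAt_of_divergeAt (hT : IsForestOrder T)
    (hpo_trans : ∀ g x y z, g ⋖ x → g ⋖ y → g ⋖ z → po g x y → po g y z → po g x z)
    (hpo_anti : ∀ g x y, g ⋖ x → g ⋖ y → po g x y → po g y x → x = y)
    {g₁ e₁ f₁ g₂ e₂ f₂ : T} (h₁ : DivergeAt g₁ e₁ f₁ a b) (hpo₁ : po g₁ e₁ f₁)
    (h₂ : DivergeAt g₂ e₂ f₂ b c) (hpo₂ : po g₂ e₂ f₂) : planarLE po a c := by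
  refine Or.inr ?_
  rcases hT.lt_trichotomy_of_le h₁.base_le_right h₂.base_le_left with hlt | rfl | hgt
  · have hf₁ : f₁ ≤ g₂ := hT.covBy_le_of_lt h₁.right_covBy h₁.right_le hlt h₂.base_le_left
    exact ⟨g₁, e₁, f₁, h₁.mono h₁.left_le (hf₁.trans h₂.base_le_right), hpo₁⟩
  · obtain rfl : f₁ = e₂ :=
      hT.eq_of_covBy_of_le h₁.right_covBy h₂.left_covBy h₁.right_le h₂.left_le
    refine ⟨g₁, e₁, f₂, ⟨h₁.left_covBy, h₂.right_covBy, ?_, h₁.left_le, h₂.right_le⟩,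
      hpo_trans _ _ _ _ h₁.left_covBy h₁.right_covBy h₂.right_covBy hpo₁ hpo₂⟩
    rintro rfl
    exact h₁.ne (hpo_anti _ _ _ h₁.left_covBy h₁.right_covBy hpo₁ hpo₂)
  · have he₂ : e₂ ≤ g₁ := hT.covBy_le_of_lt h₂.left_covBy h₂.left_le hgt h₁.base_le_right
    exact ⟨g₂, e₂, f₂, h₂.mono (he₂.trans h₁.base_le_left) h₂.right_le, hpo₂⟩

theorem IsForestOrder.planarLE_trans (hT : IsForestOrder T)
    (hpo_trans : ∀ g x y z, g ⋖ x → g ⋖ y → g ⋖ z → po g x y → po g y z → po g x z)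
    (hpo_anti : ∀ g x y, g ⋖ x → g ⋖ y → po g x y → po g y x → x = y) :
    planarLE po a b → planarLE po b c → planarLE po a c := by
  rintro (hab | ⟨g₁, e₁, f₁, h₁, hpo₁⟩) (hbc | ⟨g₂, e₂, f₂, h₂, hpo₂⟩)
  · exact Or.inl (hab.trans hbc)
  · exact hT.planarLE_of_le_of_divergeAt hab h₂ hpo₂
  · exact Or.inr ⟨g₁, e₁, f₁, h₁.mono h₁.left_le (h₁.right_le.trans hbc), hpo₁⟩
  · exact hT.planarLE_of_divergeAt_of_divergeAt hpo_trans hpo_anti h₁ hpo₁ h₂ hpo₂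

theorem IsForestOrder.planarLE_antisymm (hT : IsForestOrder T)
    (hpo_anti : ∀ g x y, g ⋖ x → g ⋖ y → po g x y → po g y x → x = y) :
    planarLE po a b → planarLE po b a → a = b := by
  rintro (hab | ⟨g₁, e₁, f₁, h₁, hpo₁⟩) (hba | ⟨g₂, f₂, e₂, h₂, hpo₂⟩)
  · exact le_antisymm hab hba
  · exact absurd hab (h₂.symm.not_le hT)
  · exact absurd hba (h₁.symm.not_le hT)
  · obtain ⟨rfl, rfl, rfl⟩ := h₁.unique h₂.symm hT
    exact absurd (hpo_anti _ _ _ h₁.left_covBy h₁.right_covBy hpo₁ hpo₂) h₁.ne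

theorem planarLE_total [Finite T] [IsCodirectedOrder T]
    (hpo_total : ∀ g x y, g ⋖ x → g ⋖ y → po g x y ∨ po g y x) (a b : T) :
    planarLE po a b ∨ planarLE po b a := by
  by_cases hab : a ≤ b
  · exact Or.inl (planarLE_of_le hab)
  by_cases hba : b ≤ a
  · exact Or.inr (planarLE_of_le hba)
  obtain ⟨g, e', f', h⟩ := exists_divergeAt hab hba
  exact (hpo_total g e' f' h.left_covBy h.right_covBy).imp
    (fun hpo => Or.inr ⟨g, e', f', h, hpo⟩) (fun hpo => Or.inr ⟨g, f', e', h.symm, hpo⟩)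

end planarLE

theorem stmt2_general {T : Type} [Fintype T] [PartialOrder T]
    (r : T) (hroot : ∀ t, r ≤ t)
    (hchain : ∀ e s t : T, s ≤ e → t ≤ e → s ≤ t ∨ t ≤ s)
    (po : T → T → T → Prop)
    (hpo_trans : ∀ g x y z, g ⋖ x → g ⋖ y → g ⋖ z → po g x y → po g y z → po g x z)
    (hpo_anti : ∀ g x y, g ⋖ x → g ⋖ y → po g x y → po g y x → x = y)
    (hpo_total : ∀ g x y, g ⋖ x → g ⋖ y → po g x y ∨ po g y x)
    (ple : T → T → Prop)
    (hdef : ∀ e f, ple e f ↔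
      (e ≤ f ∨ ∃ g e' f' : T, g ⋖ e' ∧ g ⋖ f' ∧ e' ≠ f' ∧ e' ≤ e ∧ f' ≤ f ∧ po g e' f')) :
    (∀ e, ple e e) ∧
    (∀ e f g, ple e f → ple f g → ple e g) ∧
    (∀ e f, ple e f → ple f e → e = f) ∧
    (∀ e f, ple e f ∨ ple f e) ∧
    (∀ e f, e ≤ f → ple e f) := by
  have hT : IsForestOrder T := hchain
  have : IsCodirectedOrder T := ⟨fun a b => ⟨r, hroot a, hroot b⟩⟩
  obtain rfl : ple = planarLE po := by
    ext e f
    simp only [hdef, planarLE, divergeAt_iff, and_assoc]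
  exact ⟨planarLE_refl, fun _ _ _ => hT.planarLE_trans hpo_trans hpo_anti,
    fun _ _ => hT.planarLE_antisymm hpo_anti, planarLE_total hpo_total,
    fun _ _ => planarLE_of_le⟩

/-- A planar structure (a total order `po g` on the set of immediate successors of
each element `g`) induces a total order `ple` on a finite tree extending the partial
order: `e ⪯ f` iff `e ≤ f`, or the unique siblings `e' ≤ e`, `f' ≤ f` over a common
element `g` satisfy `e' ⪯_g f'`. -/
theorem stmt2 {T : Type} [Fintype T] [PartialOrder T]
    (r : T) (hroot : ∀ t, r ≤ t)
    (hchain : ∀ e s t : T, s ≤ e → t ≤ e → s ≤ t ∨ t ≤ s)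
    (po : T → T → T → Prop)
    (hpo_refl : ∀ g x, g ⋖ x → po g x x)
    (hpo_trans : ∀ g x y z, g ⋖ x → g ⋖ y → g ⋖ z → po g x y → po g y z → po g x z)
    (hpo_anti : ∀ g x y, g ⋖ x → g ⋖ y → po g x y → po g y x → x = y)
    (hpo_total : ∀ g x y, g ⋖ x → g ⋖ y → po g x y ∨ po g y x)
    (ple : T → T → Prop)
    (hdef : ∀ e f, ple e f ↔
      (e ≤ f ∨ ∃ g e' f' : T, g ⋖ e' ∧ g ⋖ f' ∧ e' ≠ f' ∧ e' ≤ e ∧ f' ≤ f ∧ po g e' f')) :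
    (∀ e, ple e e) ∧
    (∀ e f g, ple e f → ple f g → ple e g) ∧
    (∀ e f, ple e f → ple f e → e = f) ∧
    (∀ e f, ple e f ∨ ple f e) ∧
    (∀ e f, e ≤ f → ple e f) :=
  stmt2_general r hroot hchain po hpo_trans hpo_anti hpo_total ple hdef
end

section
/- Let (T, ≤, L) be a tree. If (t₁,...,tₙ; t) is an operation of T and for each i ∈ {1,...,n}, (t_{i,1},...,t_{i,kᵢ}; tᵢ) is an operation of T, then the composite (t_{1,1},...,t_{1,k₁},t_{2,1},...,t_{n,kₙ}; t) is also an operation of T. -/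
/-! Both clauses of `IsOperation` count the inputs below a maximal element `s`: clause (a) asks
for exactly one, clause (b) for at most one. Counting is additive along `List.flatten`, and an
input of `us i` can only lie below `s` when `ts.get i` does, so the count for the composite is
the count for `us i` at the single `i` with `ts.get i ≤ s`, if there is one, and `0` otherwise. -/

def IsOperation {α : Type} [PartialOrder α] (L : Set α) (ts : List α) (t : α) : Prop :=
  (∀ x ∈ ts, t ≤ x) ∧
  (∀ l ∈ L, t ≤ l → ∃! i : Fin ts.length, ts.get i ≤ l) ∧
  (∀ s : α, IsMax s → s ∉ L → t ≤ s →
    ∀ i j : Fin ts.length, ts.get i ≤ s → ts.get j ≤ s → i = j)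

open Finset

namespace List

variable {α : Type*}

theorem card_filter_get_eq_countP (ls : List α) (p : α → Prop) [DecidablePred p] :
    #{i : Fin ls.length | p (ls.get i)} = ls.countP (p ·) := by
  rw [card_def, filter_val, ← Multiset.countP_map, Fin.univ_val_map, ofFn_get,
    Multiset.coe_countP]

theorem countP_eq_one_iff (ls : List α) (p : α → Prop) [DecidablePred p] :
    ls.countP (p ·) = 1 ↔ ∃! i : Fin ls.length, p (ls.get i) := by
  rw [Fintype.existsUnique_iff_card_one, card_filter_get_eq_countP]

theorem countP_le_one_iff (ls : List α) (p : α → Prop) [DecidablePred p] :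
    ls.countP (p ·) ≤ 1 ↔
      ∀ i j : Fin ls.length, p (ls.get i) → p (ls.get j) → i = j := by
  rw [← card_filter_get_eq_countP, card_le_one]
  simp only [mem_filter_univ]
  exact ⟨fun h i j hi => h i hi j, fun h i hi j => h i j hi⟩

theorem countP_flatten_map_finRange {n : ℕ} (us : Fin n → List α) (p : α → Bool) :
    (((finRange n).map us).flatten).countP p = ∑ i, (us i).countP p := by
  rw [countP_flatten, map_map, Fin.sum_univ_def]
  rfl

end List

section Composition

variable {α : Type} [PartialOrder α] [DecidableLE α]

theorem countP_le_eq_zero_of_forall_le {us : List α} {u s : α} (hu : ∀ x ∈ us, u ≤ x)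
    (hus : ¬u ≤ s) : us.countP (· ≤ s) = 0 :=
  List.countP_eq_zero.mpr fun x hx hxs => hus ((hu x hx).trans (of_decide_eq_true hxs))

theorem countP_le_flatten_eq_sum {ts : List α} {us : Fin ts.length → List α}
    (hus : ∀ i, ∀ x ∈ us i, ts.get i ≤ x) (s : α) :
    (((List.finRange ts.length).map us).flatten).countP (· ≤ s) =
      ∑ i ∈ {i | ts.get i ≤ s}, (us i).countP (· ≤ s) := by
  rw [List.countP_flatten_map_finRange, sum_filter_of_ne]
  intro i _ hi
  by_contra his
  exact hi (countP_le_eq_zero_of_forall_le (hus i) his)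

end Composition

theorem stmt4_general {T : Type} [PartialOrder T]
    (L : Set T)
    (t : T) (ts : List T) (hts : IsOperation L ts t)
    (us : Fin ts.length → List T)
    (hus : ∀ i : Fin ts.length, IsOperation L (us i) (ts.get i)) :
    IsOperation L (((List.finRange ts.length).map us).flatten) t := by
  classical
  obtain ⟨hts_le, hts_leaf, hts_stump⟩ := hts
  have hus_le i := (hus i).1
  refine ⟨fun x hx => ?_, fun l hl htl => ?_, fun s hs hsL hts' => ?_⟩
  · obtain ⟨_, ⟨i, -, rfl⟩, hxi⟩ := by simpa only [List.mem_flatten, List.mem_map] using hx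
    exact (hts_le _ (ts.get_mem i)).trans (hus_le i x hxi)
  · rw [← List.countP_eq_one_iff _ (· ≤ l), countP_le_flatten_eq_sum hus_le]
    obtain ⟨i, hi⟩ :=
      card_eq_one.mp ((Fintype.existsUnique_iff_card_one _).mp (hts_leaf l hl htl))
    have hil : i ∈ ({j | ts.get j ≤ l} : Finset _) := hi ▸ mem_singleton_self i
    rw [hi, sum_singleton, List.countP_eq_one_iff _ (· ≤ l)]
    exact (hus i).2.1 l hl ((mem_filter_univ i).mp hil)
  · rw [← List.countP_le_one_iff _ (· ≤ s), countP_le_flatten_eq_sum hus_le]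
    calc ∑ i ∈ {i | ts.get i ≤ s}, (us i).countP (· ≤ s)
        ≤ #{i | ts.get i ≤ s} • 1 := sum_le_card_nsmul _ _ _ fun i hi =>
          (List.countP_le_one_iff _ _).mpr ((hus i).2.2 s hs hsL ((mem_filter_univ i).mp hi))
      _ ≤ 1 := by
          rw [smul_eq_mul, mul_one, List.card_filter_get_eq_countP _ (· ≤ s),
            List.countP_le_one_iff]
          exact hts_stump s hs hsL hts'

/-- Operations of a tree compose: substituting an operation `(us i; ts i)` into each
input of an operation `(ts; t)` yields an operation. -/
theorem stmt4 {T : Type} [Fintype T] [PartialOrder T]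
    (r : T) (hroot : ∀ t, r ≤ t)
    (hchain : ∀ e s t : T, s ≤ e → t ≤ e → s ≤ t ∨ t ≤ s)
    (L : Set T) (hL : ∀ l ∈ L, IsMax l)
    (t : T) (ts : List T) (hts : IsOperation L ts t)
    (us : Fin ts.length → List T)
    (hus : ∀ i : Fin ts.length, IsOperation L (us i) (ts.get i)) :
    IsOperation L (((List.finRange ts.length).map us).flatten) t :=
  stmt4_general L t ts hts us hus
end

section
/- Let (T, ≤, L) be a tree and let e be an inner edge of T (i.e., neither the root nor a leaf nor a stump). Then (T \ {e}, ≤ restricted, L) is again a tree: it has the same root, its down-sets are chains, and L is still a set of maximal elements; moreover the inclusion T \ {e} ↪ T sends operations of T \ {e} to operations of T. -/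
lemma getMapVal {α β : Type} (f : α → β) (ts : List α) (k : Fin (ts.map f).length) :
    (ts.map f).get k = f (ts.get ⟨k, by simpa using k.isLt⟩) := by simp

/-- Removing an inner edge `e` (neither root, leaf, nor maximal) from a tree
`(T, ≤, L)` yields again a tree `(T \ {e}, ≤, L)`: same root, chain down-sets, `L`
still a set of maximal elements; and the inclusion sends operations to operations. -/
theorem stmt7 {T : Type} [Fintype T] [PartialOrder T]
    (r : T) (hroot : ∀ t, r ≤ t)
    (hchain : ∀ e s t : T, s ≤ e → t ≤ e → s ≤ t ∨ t ≤ s)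
    (L : Set T) (hL : ∀ l ∈ L, IsMax l)
    (e : T) (her : e ≠ r) (heL : e ∉ L) (hem : ¬ IsMax e) :
    (∀ x : {y : T // y ≠ e}, (⟨r, Ne.symm her⟩ : {y : T // y ≠ e}) ≤ x) ∧
    (∀ c s t : {y : T // y ≠ e}, s ≤ c → t ≤ c → s ≤ t ∨ t ≤ s) ∧
    (∀ l : {y : T // y ≠ e}, l.val ∈ L → IsMax l) ∧
    (∀ (ts : List {y : T // y ≠ e}) (t : {y : T // y ≠ e}),
      IsOperation {x : {y : T // y ≠ e} | x.val ∈ L} ts t →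
      IsOperation L (ts.map Subtype.val) t.val) := by

  refine ⟨fun x => hroot x.val, fun c s t hs ht => hchain c.val s.val t.val hs ht,
    fun l hl x hx => hL l.val hl hx, fun ts t hop => ?_⟩
  obtain ⟨h1, h2, h3⟩ := hop
  refine ⟨?_, ?_, ?_⟩
  · intro x hx
    simp only [List.mem_map] at hx
    obtain ⟨a, ha, rfl⟩ := hx
    exact h1 a ha
  · intro l hl htl
    have hle : l ≠ e := fun h => heL (h ▸ hl)
    obtain ⟨i, hi, hu⟩ := h2 ⟨l, hle⟩ hl htl
    refine ⟨⟨i, by simp⟩, ?_, ?_⟩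
    · simp only [getMapVal]; exact hi
    · intro j hj
      rw [getMapVal] at hj
      have := hu ⟨j, by simpa using j.isLt⟩ hj
      apply Fin.ext
      simpa using congrArg Fin.val this
  · intro s hs hsL hts i j hi hj
    have hse : s ≠ e := fun h => hem (h ▸ hs)
    have hmax : IsMax (⟨s, hse⟩ : {y : T // y ≠ e}) := fun x hx => hs hx
    rw [getMapVal] at hi hj
    have := h3 ⟨s, hse⟩ hmax hsL hts ⟨i, by simpa using i.isLt⟩ ⟨j, by simpa using j.isLt⟩ hi hj
    apply Fin.ext
    simpa using congrArg Fin.val this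
end

section
/- Let (T, ≤, L) be a tree and let w be a top vertex, i.e., w is the set of immediate successors of a non-leaf, non-maximal element e₀ of T all of whose immediate successors are leaves. Then (T \ w, ≤ restricted, (L \ w) ∪ {e₀}) is again a tree, and the inclusion T \ w ↪ T sends operations of T \ w to operations of T. -/
/-- Chopping off a top vertex `w` (the set of immediate successors of `e₀`, all of
which are leaves) yields again a tree `(T \ w, ≤, (L \ w) ∪ {e₀})`, and the
inclusion `T \ w ↪ T` sends operations to operations. -/
theorem stmt8 {T : Type} [Fintype T] [PartialOrder T]
    (r : T) (hroot : ∀ t, r ≤ t)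
    (hchain : ∀ e s t : T, s ≤ e → t ≤ e → s ≤ t ∨ t ≤ s)
    (L : Set T) (hL : ∀ l ∈ L, IsMax l)
    (e₀ : T) (he₀L : e₀ ∉ L) (he₀m : ¬ IsMax e₀)
    (w : Set T) (hw : ∀ x : T, x ∈ w ↔ e₀ ⋖ x) (hwL : ∀ x ∈ w, x ∈ L) :
    (∃! m : {y : T // y ∉ w}, ∀ x : {y : T // y ∉ w}, m ≤ x) ∧
    (∀ c s t : {y : T // y ∉ w}, s ≤ c → t ≤ c → s ≤ t ∨ t ≤ s) ∧
    (∀ l : {y : T // y ∉ w}, (l.val ∈ L ∨ l.val = e₀) → IsMax l) ∧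
    (∀ (ts : List {y : T // y ∉ w}) (t : {y : T // y ∉ w}),
      IsOperation {x : {y : T // y ∉ w} | x.val ∈ L ∨ x.val = e₀} ts t →
      IsOperation L (ts.map Subtype.val) t.val) := by
  have he₀w : e₀ ∉ w := fun h => (hw e₀).1 h |>.lt.false
  -- key: if e₀ ≤ x and x ∉ w then x ≤ e₀
  have key : ∀ x : T, x ∉ w → e₀ ≤ x → x ≤ e₀ := by
    intro x hx hle
    rcases eq_or_lt_of_le hle with h | h
    · exact h.ge
    · obtain ⟨c, hc, hcx⟩ := exists_covBy_le_of_lt h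
      have hcw : c ∈ w := (hw c).2 hc
      have : x ≤ c := hL c (hwL c hcw) hcx
      exact absurd (le_antisymm hcx this ▸ hcw) hx
  refine ⟨⟨⟨r, fun h => ((hw r).1 h).lt.not_ge (hroot e₀)⟩,
      fun x => hroot x.val, fun m hm => le_antisymm (hm _) (hroot m.val)⟩,
    fun c s t hs ht => hchain c.val s.val t.val hs ht, ?_, ?_⟩
  · rintro ⟨l, hlw⟩ (hl | rfl)
    · intro x hx
      exact hL l hl hx
    · intro x hx
      exact key x.val x.2 hx
  · rintro ts t ⟨h1, h2, h3⟩
    refine ⟨?_, ?_, ?_⟩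
    · intro x hx
      simp only [List.mem_map] at hx
      obtain ⟨a, ha, rfl⟩ := hx
      exact h1 a ha
    · intro l hl hle
      by_cases hlw : l ∈ w
      · -- l covers e₀; t.val ≤ e₀
        have hcov : e₀ ⋖ l := (hw l).1 hlw
        have eq_l : ∀ z : T, e₀ < z → z ≤ l → z = l := fun z hz hzl =>
          (lt_or_eq_of_le hzl).resolve_left (hcov.2 hz)
        have hte : t.val ≤ e₀ := by
          rcases hchain l t.val e₀ hle hcov.le with h | h
          · exact h
          · rcases eq_or_lt_of_le h with h' | h'
            · exact h'.ge
            · exact absurd ((eq_l t.val h' hle) ▸ t.2) (fun hc => hc hlw)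
        have := h2 ⟨e₀, he₀w⟩ (Or.inr rfl) hte
        obtain ⟨i, hi, hiu⟩ := this
        refine ⟨⟨i, by simp⟩, ?_, ?_⟩
        · show ((ts.map Subtype.val).get ⟨i, by simp⟩) ≤ l
          simp only [List.get_eq_getElem, List.getElem_map]
          exact le_trans (show (ts.get i).val ≤ e₀ from hi) hcov.le
        · rintro ⟨j, hj⟩ hjl
          simp only [List.get_eq_getElem, List.getElem_map] at hjl
          have hj' : j < ts.length := by simpa using hj
          have hje : (ts.get ⟨j, hj'⟩).val ≤ e₀ := by
            rcases hchain l (ts.get ⟨j, hj'⟩).val e₀ hjl hcov.le with h | h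
            · exact h
            · rcases eq_or_lt_of_le h with h' | h'
              · exact h'.ge
              · exact absurd ((eq_l _ h' hjl) ▸ (ts.get ⟨j, hj'⟩).2) (fun hc => hc hlw)
          have := hiu ⟨j, hj'⟩ hje
          simpa [Fin.ext_iff] using congrArg Fin.val this
      · obtain ⟨i, hi, hiu⟩ := h2 ⟨l, hlw⟩ (Or.inl hl) hle
        refine ⟨⟨i, by simp⟩, ?_, ?_⟩
        · show ((ts.map Subtype.val).get ⟨i, by simp⟩) ≤ l
          simp only [List.get_eq_getElem, List.getElem_map]
          exact hi
        rintro ⟨j, hj⟩ hjl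
        simp only [List.get_eq_getElem, List.getElem_map] at hjl
        have hj' : j < ts.length := by simpa using hj
        have := hiu ⟨j, hj'⟩ hjl
        simpa [Fin.ext_iff] using congrArg Fin.val this
    · intro s hs hsL hle i j hi hj
      have hsw : s ∉ w := fun h => hsL (hwL s h)
      have hse : s ≠ e₀ := fun h => he₀m (h ▸ hs)
      have hs' : IsMax (⟨s, hsw⟩ : {y : T // y ∉ w}) := fun x hx => hs hx
      have hsL' : (⟨s, hsw⟩ : {y : T // y ∉ w}) ∉
          {x : {y : T // y ∉ w} | x.val ∈ L ∨ x.val = e₀} := by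
        rintro (h | h)
        · exact hsL h
        · exact hse h
      have hi' : (i : ℕ) < ts.length := by
        have := i.2; simpa using this
      have hj' : (j : ℕ) < ts.length := by
        have := j.2; simpa using this
      have hig : (ts.get ⟨i, hi'⟩).val ≤ s := by
        have h := hi
        simp only [List.get_eq_getElem, List.getElem_map] at h
        exact h
      have hjg : (ts.get ⟨j, hj'⟩).val ≤ s := by
        have h := hj
        simp only [List.get_eq_getElem, List.getElem_map] at h
        exact h
      have := h3 ⟨s, hsw⟩ hs' hsL' hle ⟨i, hi'⟩ ⟨j, hj'⟩ hig hjg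
      simpa [Fin.ext_iff] using congrArg Fin.val this
end

section
/- Let T be a tree with at least two vertices, and let ∂_f : ∂_f T → T and ∂_g : ∂_g T → T be two distinct elementary face maps such that the pair {∂_f, ∂_g} is not mixed (a mixed pair consists of an outer vertex v and the unique inner edge e attached to v). Then ∂_f ∂_g T and ∂_g ∂_f T exist and are equal, i.e., the edge/vertex g can still be removed from ∂_f T and vice versa, and removing f then g yields the same tree as removing g then f. -/
/-- A "pre-tree": a candidate subtree (face) of an ambient tree `T`, given by its
set of edges and the set of outputs of its vertices. -/
structure PreTree (T : Type) where
  edges : Set T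
  vert : Set T

variable {T : Type} [PartialOrder T]

/-- `x` is an input of the vertex of `Q` with output `o`. -/
def InputOf (Q : PreTree T) (x o : T) : Prop :=
  x ∈ Q.edges ∧ o < x ∧ ¬∃ y ∈ Q.edges, o < y ∧ y < x

/-- The set of inputs of the vertex of `Q` with output `o`. -/
def Inps (Q : PreTree T) (o : T) : Set T := {x | InputOf Q x o}

/-- `x` is a leaf of `Q`: an edge carrying no vertex. -/
def IsLeafOf (Q : PreTree T) (x : T) : Prop := x ∈ Q.edges ∧ x ∉ Q.vert

/-- `r` is the root edge of `Q`. -/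
def RootOf (Q : PreTree T) (r : T) : Prop := r ∈ Q.edges ∧ ∀ x ∈ Q.edges, r ≤ x

/-- `e` is an inner edge of `Q`: it carries a vertex and is an input of a vertex. -/
def InnerE (Q : PreTree T) (e : T) : Prop := e ∈ Q.vert ∧ ∃ o ∈ Q.vert, InputOf Q e o

/-- `(X; t)` is an operation of the (pre-)tree `Q`: every leaf of `Q` above `t` is
above exactly one element of `X` and every stump of `Q` above `t` is above at most
one element of `X`. -/
def IsOpIn (Q : PreTree T) (X : Set T) (t : T) : Prop :=
  X ⊆ Q.edges ∧ t ∈ Q.edges ∧ (∀ x ∈ X, t < x) ∧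
  (∀ l, IsLeafOf Q l → t ≤ l → ∃! x, x ∈ X ∧ x ≤ l) ∧
  (∀ o ∈ Q.vert, Inps Q o = ∅ → t ≤ o →
    ∀ x₁ ∈ X, ∀ x₂ ∈ X, x₁ ≤ o → x₂ ≤ o → x₁ = x₂)

/-- `P` is a subtree (face) of `Q`: edges and vertices of `P` are among those of
`Q`, and each vertex of `P` is an operation of `Q`. -/
def SubtreeRel (P Q : PreTree T) : Prop :=
  P.edges ⊆ Q.edges ∧ P.vert ⊆ Q.vert ∧ ∀ o ∈ P.vert, IsOpIn Q (Inps P o) o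

/-- The ambient tree `T` with leaf set `L`, viewed as a pre-tree. -/
def fullTree (L : Set T) : PreTree T := ⟨Set.univ, {e | e ∉ L}⟩

/-- `P` is a face of the ambient tree `T` with leaf set `L`. -/
def IsFace (L : Set T) (P : PreTree T) : Prop :=
  P.edges.Nonempty ∧ (∃ r, RootOf P r) ∧
  P.vert ⊆ P.edges ∧ (∀ e ∈ P.vert, e ∉ L) ∧
  (∀ e ∈ P.edges, (∃ x ∈ P.edges, e < x) → e ∈ P.vert) ∧
  SubtreeRel P (fullTree L)

/-- Number of vertices of a pre-tree. -/
noncomputable def nv (P : PreTree T) : ℕ := P.vert.ncard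

/-- Labels for elementary face maps: inner faces, top faces (a top vertex `w` with
output `o`), and bottom faces (the bottom vertex `v` with output the root `r`,
keeping the subtree above the input `e`). -/
inductive FLbl (T : Type) where
  | inner (e : T)
  | top (w : Set T) (o : T)
  | bot (v : Set T) (r : T) (e : T)

/-- `ElemF f P Q` : `P` is obtained from `Q` by the elementary face map labelled
`f`, i.e. there is an elementary face map `∂_f : P → Q`. -/
def ElemF (f : FLbl T) (P Q : PreTree T) : Prop :=
  match f with
  | .inner e => InnerE Q e ∧ P.edges = Q.edges \ {e} ∧ P.vert = Q.vert \ {e}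
  | .top w o => o ∈ Q.vert ∧ w = Inps Q o ∧ (∀ x ∈ w, x ∉ Q.vert) ∧
      P.edges = Q.edges \ w ∧ P.vert = Q.vert \ {o}
  | .bot v r e => RootOf Q r ∧ r ∈ Q.vert ∧ v = Inps Q r ∧ e ∈ v ∧
      (∀ x ∈ v, x ≠ e → x ∉ Q.vert) ∧
      P.edges = {x ∈ Q.edges | e ≤ x} ∧ P.vert = Q.vert \ {r}

/-- `x` is attached to the vertex of `Q` with output `o`. -/
def AttachedTo (Q : PreTree T) (x o : T) : Prop := x = o ∨ InputOf Q x o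

/-- `f` is the label of an outer (top or bottom) vertex of `Q` with output `o`. -/
def OuterLbl (Q : PreTree T) (f : FLbl T) (o : T) : Prop :=
  f = FLbl.top (Inps Q o) o ∨ (∃ e, f = FLbl.bot (Inps Q o) o e ∧ RootOf Q o)

/-- `f` is an outer vertex face label and `g` the inner face label of the unique
inner edge of `Q` attached to that vertex. -/
def MixedOrd (f g : FLbl T) (Q : PreTree T) : Prop :=
  ∃ e o, g = FLbl.inner e ∧ InnerE Q e ∧ OuterLbl Q f o ∧ AttachedTo Q e o ∧
    (∀ e', InnerE Q e' → AttachedTo Q e' o → e' = e)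

/-- `{∂_f, ∂_g}` is a mixed pair of elementary face maps of `Q`. -/
def MixedPair (f g : FLbl T) (Q : PreTree T) : Prop := MixedOrd f g Q ∨ MixedOrd g f Q

/-!
Removing the element labelled `f` deletes a set of edges and one vertex that are determined
by the label alone (`face f`), and such deletions commute. So the content is that the label
`g` is still an elementary face of `∂_f T`. This is checked label by label: in a tree every
edge covers a unique parent, removing an inner edge makes its parent the parent of its inputs,
a root vertex with only leaves as inputs would be the only vertex, and the non-mixed hypothesis
rules out exactly the pairs where removing `f` turns the inner edge `g` into an outer one.
-/

/-- The pre-tree `∂_f Q`; it is defined whether or not `f` labels a face map of `Q`. -/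
def face : FLbl T → PreTree T → PreTree T
  | .inner e, Q => ⟨Q.edges \ {e}, Q.vert \ {e}⟩
  | .top w o, Q => ⟨Q.edges \ w, Q.vert \ {o}⟩
  | .bot _ r e, Q => ⟨{x ∈ Q.edges | e ≤ x}, Q.vert \ {r}⟩

theorem ElemF.eq_face {f : FLbl T} {P Q : PreTree T} (h : ElemF f P Q) : P = face f Q := by
  obtain ⟨E, V⟩ := P
  rcases f with _ | _ | _
  · obtain ⟨-, rfl, rfl⟩ := h; rfl
  · obtain ⟨-, -, -, rfl, rfl⟩ := h; rfl
  · obtain ⟨-, -, -, -, -, rfl, rfl⟩ := h; rfl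

theorem face_comm (f g : FLbl T) (Q : PreTree T) : face g (face f Q) = face f (face g Q) := by
  rcases f with _ | _ | _ <;> rcases g with _ | _ | _ <;>
    simp only [face, PreTree.mk.injEq] <;> constructor <;> ext <;>
    simp only [Set.mem_sdiff, Set.mem_ofPred_eq] <;> tauto

theorem face_vert_subset (f : FLbl T) (Q : PreTree T) : (face f Q).vert ⊆ Q.vert := by
  cases f <;> exact Set.sdiff_subset

theorem InputOf.mono {P Q : PreTree T} {x o : T} (h : InputOf Q x o) (hx : x ∈ P.edges)
    (hPQ : P.edges ⊆ Q.edges) : InputOf P x o :=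
  ⟨hx, h.2.1, fun ⟨y, hy, hoy, hyx⟩ => h.2.2 ⟨y, hPQ hy, hoy, hyx⟩⟩

theorem inputOf_of_covBy {Q : PreTree T} {x o : T} (hx : x ∈ Q.edges) (h : o ⋖ x) :
    InputOf Q x o :=
  ⟨hx, h.lt, fun ⟨_, _, hoy, hyx⟩ => h.2 hoy hyx⟩

theorem innerE_of_covBy {Q : PreTree T} {e o : T} (he : e ∈ Q.vert) (heQ : e ∈ Q.edges)
    (ho : o ∈ Q.vert) (h : o ⋖ e) : InnerE Q e :=
  ⟨he, o, ho, inputOf_of_covBy heQ h⟩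

theorem InputOf.face_inner (hchain : ∀ e s t : T, s ≤ e → t ≤ e → s ≤ t ∨ t ≤ s)
    {Q : PreTree T} {e₁ e o : T} (h₁ : InputOf Q e₁ o) (h : InputOf Q e e₁) :
    InputOf (face (.inner e₁) Q) e o := by
  refine ⟨⟨h.1, h.2.1.ne'⟩, h₁.2.1.trans h.2.1, ?_⟩
  rintro ⟨y, ⟨hyQ, hye₁⟩, hoy, hye⟩
  rcases hchain e y e₁ hye.le h.2.1.le with hy | hy
  · exact h₁.2.2 ⟨y, hyQ, hoy, hy.lt_of_ne hye₁⟩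
  · exact h.2.2 ⟨y, hyQ, hy.lt_of_ne (Ne.symm hye₁), hye⟩

theorem innerE_face_inner (hchain : ∀ e s t : T, s ≤ e → t ≤ e → s ≤ t ∨ t ≤ s)
    {Q : PreTree T} {e₁ e : T} (hne : e₁ ≠ e) (h₁ : InnerE Q e₁) (h : InnerE Q e) :
    InnerE (face (.inner e₁) Q) e := by
  obtain ⟨he, o, ho, hoe⟩ := h
  by_cases hoe₁ : o = e₁
  · subst hoe₁
    obtain ⟨-, o₁, ho₁, ho₁e₁⟩ := h₁
    exact ⟨⟨he, hne.symm⟩, o₁, ⟨ho₁, ho₁e₁.2.1.ne⟩, ho₁e₁.face_inner hchain hoe⟩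
  · exact ⟨⟨he, hne.symm⟩, o, ⟨ho, hoe₁⟩, hoe.mono ⟨hoe.1, hne.symm⟩ Set.sdiff_subset⟩

theorem innerE_face_top {Q P : PreTree T} {w : Set T} {o e : T}
    (hf : ElemF (.top w o) P Q) (hne : e ≠ o) (h : InnerE Q e) :
    InnerE (face (.top w o) Q) e := by
  obtain ⟨-, rfl, hleaf, -, -⟩ := hf
  obtain ⟨he, o', ho', ho'e⟩ := h
  have hew : e ∉ Inps Q o := fun hw => hleaf e hw he
  have ho'o : o' ≠ o := by rintro rfl; exact hew ho'e
  exact ⟨⟨he, hne⟩, o', ⟨ho', ho'o⟩, ho'e.mono ⟨ho'e.1, hew⟩ Set.sdiff_subset⟩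

theorem mixedOrd_top_inner {Q P : PreTree T} {w : Set T} {o : T}
    (hg : ElemF (.top w o) P Q) (h : InnerE Q o) : MixedOrd (.top w o) (.inner o) Q := by
  obtain ⟨-, rfl, hleaf, -, -⟩ := hg
  refine ⟨o, o, rfl, h, Or.inl rfl, Or.inl rfl, ?_⟩
  rintro e' ⟨he', -⟩ (rfl | he'o)
  · rfl
  · exact absurd he' (hleaf e' he'o)

theorem inps_eq_of_covBy_subset [IsStronglyAtomic T] {Q : PreTree T} {o : T}
    (h : {x | o ⋖ x} ⊆ Q.edges) : Inps Q o = {x | o ⋖ x} := by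
  ext x
  refine ⟨fun ⟨_, hox, hmin⟩ => ?_, fun hx => inputOf_of_covBy (h hx) hx⟩
  obtain ⟨z, hoz, hzx⟩ := exists_covBy_le_of_lt hox
  obtain rfl | hzx := hzx.eq_or_lt
  · exact hoz
  · exact (hmin ⟨z, h hoz, hoz.lt, hzx⟩).elim

theorem eq_of_covBy_of_covBy (hchain : ∀ e s t : T, s ≤ e → t ≤ e → s ≤ t ∨ t ≤ s)
    {a b x : T} (ha : a ⋖ x) (hb : b ⋖ x) : a = b := by
  rcases hchain x a b ha.le hb.le with h | h
  · exact h.eq_of_not_lt fun hab => ha.2 hab hb.lt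
  · exact (h.eq_of_not_lt fun hba => hb.2 hba ha.lt).symm

section FullTree

variable {L : Set T}

@[simp]
theorem inputOf_fullTree_iff {x o : T} : InputOf (fullTree L) x o ↔ o ⋖ x :=
  ⟨fun ⟨_, hlt, h⟩ => ⟨hlt, fun y hoy hyx => h ⟨y, trivial, hoy, hyx⟩⟩, inputOf_of_covBy trivial⟩

@[simp]
theorem inps_fullTree (o : T) : Inps (fullTree L) o = {x | o ⋖ x} :=
  Set.ext fun _ => inputOf_fullTree_iff

theorem innerE_fullTree_iff {e : T} : InnerE (fullTree L) e ↔ e ∉ L ∧ ∃ o ∉ L, o ⋖ e := by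
  simp only [InnerE, inputOf_fullTree_iff]
  rfl

theorem ElemF.top_fullTree {w : Set T} {o : T} {P : PreTree T}
    (h : ElemF (.top w o) P (fullTree L)) :
    o ∉ L ∧ w = {x | o ⋖ x} ∧ ∀ x, o ⋖ x → x ∈ L := by
  obtain ⟨ho, rfl, hleaf, -, -⟩ := h
  exact ⟨ho, inps_fullTree o, fun x hx => not_not.1 (hleaf x (inputOf_fullTree_iff.2 hx))⟩

theorem ElemF.bot_fullTree {v : Set T} {r e : T} {P : PreTree T}
    (h : ElemF (.bot v r e) P (fullTree L)) :
    (∀ x, r ≤ x) ∧ r ∉ L ∧ v = {x | r ⋖ x} ∧ r ⋖ e ∧ ∀ x, r ⋖ x → x ≠ e → x ∈ L := by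
  obtain ⟨hr, hrL, rfl, he, hleaf, -, -⟩ := h
  exact ⟨fun x => hr.2 x trivial, hrL, inps_fullTree r, inputOf_fullTree_iff.1 he,
    fun x hx hxe => not_not.1 (hleaf x (inputOf_fullTree_iff.2 hx) hxe)⟩

theorem mixedOrd_bot_inner {P : PreTree T} {v : Set T} {r e : T}
    (hg : ElemF (.bot v r e) P (fullTree L)) (h : InnerE (fullTree L) e) :
    MixedOrd (.bot v r e) (.inner e) (fullTree L) := by
  obtain ⟨hr, -, rfl, he, hleaf, -, -⟩ := hg
  refine ⟨e, r, rfl, h, Or.inr ⟨e, rfl, hr⟩, Or.inr he, ?_⟩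
  rintro e' ⟨he'L, o, -, ho⟩ (rfl | he')
  · exact absurd (hr.2 o trivial) (inputOf_fullTree_iff.1 ho).lt.not_ge
  · by_contra hne
    exact hleaf e' he' hne he'L

variable [IsStronglyAtomic T]

theorem exists_covBy_le_notMem (hL : ∀ l ∈ L, IsMax l) {o y : T} (hy : o < y) (hyL : y ∉ L) :
    ∃ z, o ⋖ z ∧ z ≤ y ∧ z ∉ L := by
  obtain ⟨z, hoz, hzy⟩ := exists_covBy_le_of_lt hy
  refine ⟨z, hoz, hzy, fun hzL => hyL ?_⟩
  rwa [← hzy.antisymm (hL z hzL hzy)]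

theorem le_of_forall_covBy_ne_mem (hL : ∀ l ∈ L, IsMax l) {o e y : T}
    (h : ∀ x, o ⋖ x → x ≠ e → x ∈ L) (hy : o < y) (hyL : y ∉ L) : e ≤ y := by
  obtain ⟨z, hoz, hzy, hzL⟩ := exists_covBy_le_notMem hL hy hyL
  obtain rfl : z = e := by_contra fun hze => hzL (h z hoz hze)
  exact hzy

theorem exists_covBy_notMem_of_two_le (hL : ∀ l ∈ L, IsMax l) {r : T} (hr : ∀ x, r ≤ x)
    (htwo : 2 ≤ nv (fullTree L)) : ∃ x, r ⋖ x ∧ x ∉ L := by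
  by_contra! h
  have hsub : (fullTree L).vert ⊆ {r} := by
    intro y hyL
    by_contra hyr
    obtain ⟨z, hrz, -, hzL⟩ := exists_covBy_le_notMem hL ((hr y).lt_of_ne (Ne.symm hyr)) hyL
    exact hzL (h z hrz)
  have := Set.ncard_le_ncard hsub
  rw [Set.ncard_singleton] at this
  exact absurd htwo (by unfold nv; omega)

theorem ElemF.root_lt_top (hL : ∀ l ∈ L, IsMax l) (htwo : 2 ≤ nv (fullTree L)) {P : PreTree T}
    {w : Set T} {o r : T} (hg : ElemF (.top w o) P (fullTree L)) (hr : ∀ x, r ≤ x) : r < o := by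
  refine (hr o).lt_of_ne ?_
  rintro rfl
  obtain ⟨x, hx, hxL⟩ := exists_covBy_notMem_of_two_le hL hr htwo
  exact hxL (hg.top_fullTree.2.2 x hx)

theorem ElemF.top_face_of_subset {P Q : PreTree T} {w : Set T} {o : T}
    (hg : ElemF (.top w o) P (fullTree L)) (hQ : Q.vert ⊆ (fullTree L).vert) (ho : o ∈ Q.vert)
    (hw : w ⊆ Q.edges) : ElemF (.top w o) (face (.top w o) Q) Q := by
  obtain ⟨-, rfl, hleaf⟩ := hg.top_fullTree
  exact ⟨ho, (inps_eq_of_covBy_subset hw).symm, fun x hx hxQ => hQ hxQ (hleaf x hx), rfl, rfl⟩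

theorem ElemF.bot_face_of_subset {P Q : PreTree T} {v : Set T} {r e : T}
    (hg : ElemF (.bot v r e) P (fullTree L)) (hQ : Q.vert ⊆ (fullTree L).vert)
    (hr : r ∈ Q.edges) (hrv : r ∈ Q.vert) (hv : v ⊆ Q.edges) :
    ElemF (.bot v r e) (face (.bot v r e) Q) Q := by
  obtain ⟨hroot, -, rfl, he, hleaf⟩ := hg.bot_fullTree
  exact ⟨⟨hr, fun x _ => hroot x⟩, hrv, (inps_eq_of_covBy_subset hv).symm, he,
    fun x hx hxe hxQ => hQ hxQ (hleaf x hx hxe), rfl, rfl⟩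

theorem innerE_face_bot (hL : ∀ l ∈ L, IsMax l) {P : PreTree T} {v : Set T} {r e₀ e : T}
    (hf : ElemF (.bot v r e₀) P (fullTree L)) (hne : e ≠ e₀) (h : InnerE (fullTree L) e) :
    InnerE (face (.bot v r e₀) (fullTree L)) e := by
  obtain ⟨hroot, -, -, -, hleaf⟩ := hf.bot_fullTree
  obtain ⟨heL, o, hoL, hoe⟩ := innerE_fullTree_iff.1 h
  have hro : r < o := (hroot o).lt_of_ne fun hro => heL (hleaf e (hro ▸ hoe) hne)
  have he₀o : e₀ ≤ o := le_of_forall_covBy_ne_mem hL hleaf hro hoL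
  exact innerE_of_covBy ⟨heL, (hro.trans hoe.lt).ne'⟩ ⟨trivial, he₀o.trans hoe.le⟩
    ⟨hoL, hro.ne'⟩ hoe

theorem innerE_face (hL : ∀ l ∈ L, IsMax l)
    (hchain : ∀ e s t : T, s ≤ e → t ≤ e → s ≤ t ∨ t ≤ s) {f : FLbl T} {P : PreTree T} {e : T}
    (hf : ElemF f P (fullTree L)) (he : InnerE (fullTree L) e) (hne : f ≠ .inner e)
    (hmix : ¬ MixedOrd f (.inner e) (fullTree L)) : InnerE (face f (fullTree L)) e := by
  rcases f with e₁ | ⟨w, o⟩ | ⟨v, r, e₀⟩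
  · exact innerE_face_inner hchain (by rintro rfl; exact hne rfl) hf.1 he
  · exact innerE_face_top hf (by rintro rfl; exact hmix (mixedOrd_top_inner hf he)) he
  · exact innerE_face_bot hL hf (by rintro rfl; exact hmix (mixedOrd_bot_inner hf he)) he

theorem elemF_top_face (hL : ∀ l ∈ L, IsMax l)
    (hchain : ∀ e s t : T, s ≤ e → t ≤ e → s ≤ t ∨ t ≤ s) (htwo : 2 ≤ nv (fullTree L))
    {f : FLbl T} {w : Set T} {o : T} {Pf Pg : PreTree T} (hf : ElemF f Pf (fullTree L))
    (hg : ElemF (.top w o) Pg (fullTree L)) (hne : f ≠ .top w o)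
    (hmix : ¬ MixedOrd (.top w o) f (fullTree L)) :
    ElemF (.top w o) (face (.top w o) (face f (fullTree L))) (face f (fullTree L)) := by
  obtain ⟨hoL, rfl, hleaf⟩ := hg.top_fullTree
  rcases f with e₁ | ⟨w₁, o₁⟩ | ⟨v, r, e₀⟩
  · refine hg.top_face_of_subset (face_vert_subset _ _) ⟨hoL, ?_⟩ fun x hx => ⟨trivial, ?_⟩
    · rintro rfl
      exact hmix (mixedOrd_top_inner hg hf.1)
    · rintro rfl
      exact hf.1.1 (hleaf _ hx)
  · obtain ⟨-, rfl, -⟩ := hf.top_fullTree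
    refine hg.top_face_of_subset (face_vert_subset _ _) ⟨hoL, ?_⟩ fun x hx => ⟨trivial, ?_⟩
    · rintro rfl
      exact hne rfl
    · exact fun hx₁ => hne (by rw [eq_of_covBy_of_covBy hchain hx₁ hx])
  · obtain ⟨hroot, -, -, -, hleaf₀⟩ := hf.bot_fullTree
    have hro : r < o := hg.root_lt_top hL htwo hroot
    have he₀o : e₀ ≤ o := le_of_forall_covBy_ne_mem hL hleaf₀ hro hoL
    exact hg.top_face_of_subset (face_vert_subset _ _) ⟨hoL, hro.ne'⟩
      fun x hx => ⟨trivial, he₀o.trans hx.le⟩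

theorem elemF_bot_face (hL : ∀ l ∈ L, IsMax l) (htwo : 2 ≤ nv (fullTree L))
    {f : FLbl T} {v : Set T} {r e₀ : T} {Pf Pg : PreTree T} (hf : ElemF f Pf (fullTree L))
    (hg : ElemF (.bot v r e₀) Pg (fullTree L)) (hne : f ≠ .bot v r e₀)
    (hmix : ¬ MixedOrd (.bot v r e₀) f (fullTree L)) :
    ElemF (.bot v r e₀) (face (.bot v r e₀) (face f (fullTree L))) (face f (fullTree L)) := by
  obtain ⟨hroot, hrL, rfl, -, hleaf⟩ := hg.bot_fullTree
  rcases f with e₁ | ⟨w₁, o₁⟩ | ⟨v₁, r₁, e₁⟩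
  · obtain ⟨he₁L, o₁, -, ho₁⟩ := innerE_fullTree_iff.1 hf.1
    have hre₁ : r ≠ e₁ := ((hroot o₁).trans_lt ho₁.lt).ne
    refine hg.bot_face_of_subset (face_vert_subset _ _) ⟨trivial, hre₁⟩ ⟨hrL, hre₁⟩
      fun x hx => ⟨trivial, ?_⟩
    rintro rfl
    refine he₁L (hleaf x hx ?_)
    rintro rfl
    exact hmix (mixedOrd_bot_inner hg hf.1)
  · obtain ⟨-, rfl, -⟩ := hf.top_fullTree
    have hro₁ : r < o₁ := hf.root_lt_top hL htwo hroot
    exact hg.bot_face_of_subset (face_vert_subset _ _) ⟨trivial, fun h => h.lt.not_ge (hroot o₁)⟩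
      ⟨hrL, hro₁.ne⟩ fun x hx => ⟨trivial, fun hx₁ => hx.2 hro₁ hx₁.lt⟩
  · obtain ⟨hroot₁, -, rfl, -, hleaf₁⟩ := hf.bot_fullTree
    obtain rfl : r₁ = r := (hroot₁ r).antisymm (hroot r₁)
    have he : e₁ ≠ e₀ := by rintro rfl; exact hne rfl
    obtain ⟨x, hx, hxL⟩ := exists_covBy_notMem_of_two_le hL hroot htwo
    by_cases hx₀ : x = e₀
    · subst hx₀
      exact absurd (hleaf₁ x hx he.symm) hxL
    · exact absurd (hleaf x hx hx₀) hxL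

theorem elemF_face_face (hL : ∀ l ∈ L, IsMax l)
    (hchain : ∀ e s t : T, s ≤ e → t ≤ e → s ≤ t ∨ t ≤ s) (htwo : 2 ≤ nv (fullTree L))
    {f g : FLbl T} {Pf Pg : PreTree T} (hf : ElemF f Pf (fullTree L))
    (hg : ElemF g Pg (fullTree L)) (hne : f ≠ g) (hmix : ¬ MixedPair f g (fullTree L)) :
    ElemF g (face g (face f (fullTree L))) (face f (fullTree L)) := by
  rcases g with e | ⟨w, o⟩ | ⟨v, r, e₀⟩
  · exact ⟨innerE_face hL hchain hf hg.1 hne (hmix ∘ Or.inl), rfl, rfl⟩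
  · exact elemF_top_face hL hchain htwo hf hg hne (hmix ∘ Or.inr)
  · exact elemF_bot_face hL htwo hf hg hne (hmix ∘ Or.inr)

end FullTree

theorem stmt11_general {T : Type} [Fintype T] [PartialOrder T]
    (hchain : ∀ e s t : T, s ≤ e → t ≤ e → s ≤ t ∨ t ≤ s)
    (L : Set T) (hL : ∀ l ∈ L, IsMax l)
    (htwo : 2 ≤ nv (fullTree L))
    (f g : FLbl T) (Pf Pg : PreTree T)
    (hf : ElemF f Pf (fullTree L)) (hg : ElemF g Pg (fullTree L))
    (hne : f ≠ g) (hmix : ¬ MixedPair f g (fullTree L)) :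
    ∃ P : PreTree T, ElemF g P Pf ∧ ElemF f P Pg := by
  obtain rfl := hf.eq_face
  obtain rfl := hg.eq_face
  refine ⟨face g (face f (fullTree L)), elemF_face_face hL hchain htwo hf hg hne hmix, ?_⟩
  rw [face_comm]
  exact elemF_face_face hL hchain htwo hg hf hne.symm (hmix ∘ Or.symm)

/-- For a tree with at least two vertices and a non-mixed pair of distinct
elementary face maps `∂_f : P_f → T`, `∂_g : P_g → T`, the faces `∂_f ∂_g T` and
`∂_g ∂_f T` exist and coincide: `∂_f ∂_g = ∂_g ∂_f`. -/
theorem stmt11 {T : Type} [Fintype T] [PartialOrder T]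
    (rT : T) (hroot : ∀ t, rT ≤ t)
    (hchain : ∀ e s t : T, s ≤ e → t ≤ e → s ≤ t ∨ t ≤ s)
    (L : Set T) (hL : ∀ l ∈ L, IsMax l)
    (htwo : 2 ≤ nv (fullTree L))
    (f g : FLbl T) (Pf Pg : PreTree T)
    (hf : ElemF f Pf (fullTree L)) (hg : ElemF g Pg (fullTree L))
    (hne : f ≠ g) (hmix : ¬ MixedPair f g (fullTree L)) :
    ∃ P : PreTree T, ElemF g P Pf ∧ ElemF f P Pg :=
  stmt11_general hchain L hL htwo f g Pf Pg hf hg hne hmix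
end

section
/- Let T be a tree with an inner edge e attached to a top vertex v (e is the output of v) and to another vertex w (e is an input of w), such that all other inputs of w are leaves of T. Then the face ∂_w ∂_v T exists, the face ∂_{w∘ₑv} ∂_e T exists (where w∘ₑv = (w ∪ v) \ {e} is the composed vertex in ∂_e T), and the dendroidal relation ∂_w ∂_v T = ∂_{w∘ₑv} ∂_e T holds as subtrees of T. -/
variable {T : Type} [PartialOrder T]

/-- Let `e` be an inner edge of the tree `T` which is the output of a top vertex
`v` and an input of a vertex `w` with output `o`, all other inputs of `w` being
leaves.  Then `∂_w ∂_v T` exists, `∂_{w∘ₑv} ∂_e T` exists (where `w∘ₑv` is the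
composed vertex of `∂_e T`, a top vertex with output `o`), and the dendroidal
relation `∂_w ∂_v T = ∂_{w∘ₑv} ∂_e T` holds as subtrees of `T`. -/
theorem stmt12 {T : Type} [Fintype T] [PartialOrder T]
    (rT : T) (hroot : ∀ t, rT ≤ t)
    (hchain : ∀ e s t : T, s ≤ e → t ≤ e → s ≤ t ∨ t ≤ s)
    (L : Set T) (hL : ∀ l ∈ L, IsMax l)
    (e o : T)
    (heL : e ∉ L)                                -- `e` carries the vertex `v`
    (htop : ∀ x, InputOf (fullTree L) x e → x ∈ L)  -- `v` is a top vertex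
    (hin : InputOf (fullTree L) e o)             -- `e` is an input of `w`
    (hoL : o ∉ L)                                -- `o` carries the vertex `w`
    (hw : ∀ x, InputOf (fullTree L) x o → x ≠ e → x ∈ L) :
    ∃ P₁ P₂ P : PreTree T,
      ElemF (FLbl.top (Inps (fullTree L) e) e) P₁ (fullTree L) ∧
      ElemF (FLbl.inner e) P₂ (fullTree L) ∧
      ElemF (FLbl.top (Inps P₁ o) o) P P₁ ∧
      ElemF (FLbl.top (Inps P₂ o) o) P P₂ := by
  classical
  have hoe : o < e := hin.2.1
  have hone : o ≠ e := ne_of_lt hoe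
  set F : PreTree T := fullTree L with hF
  set P₁ : PreTree T := ⟨Set.univ \ Inps F e, {x | x ∉ L} \ {e}⟩ with hP₁def
  set P₂ : PreTree T := ⟨Set.univ \ {e}, {x | x ∉ L} \ {e}⟩ with hP₂def
  have heP₁ : e ∈ P₁.edges := ⟨trivial, fun h => lt_irrefl e h.2.1⟩
  have heIo : e ∈ Inps F o := hin
  have hA : Inps P₁ o = Inps F o := by
    ext x
    constructor
    · rintro ⟨hx, hox, hno⟩
      refine ⟨trivial, hox, ?_⟩
      rintro ⟨y, -, hoy, hyx⟩
      by_cases hy : y ∈ Inps F e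
      · exact hno ⟨e, heP₁, hoe, lt_trans hy.2.1 hyx⟩
      · exact hno ⟨y, ⟨trivial, hy⟩, hoy, hyx⟩
    · rintro ⟨-, hox, hno⟩
      have hxI : x ∉ Inps F e := fun hx => hno ⟨e, trivial, hoe, hx.2.1⟩
      refine ⟨⟨trivial, hxI⟩, hox, ?_⟩
      rintro ⟨y, hy, hoy, hyx⟩
      exact hno ⟨y, trivial, hoy, hyx⟩
  have hB : Inps P₂ o = (Inps F o ∪ Inps F e) \ {e} := by
    ext x
    constructor
    · rintro ⟨hx, hox, hno⟩
      have hxe : x ≠ e := hx.2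
      refine ⟨?_, hxe⟩
      by_cases hxo : x ∈ Inps F o
      · exact Or.inl hxo
      · have hex : ∃ y, o < y ∧ y < x := by
          by_contra h
          push_neg at h
          refine hxo ⟨trivial, hox, ?_⟩
          rintro ⟨y, -, hoy, hyx⟩
          exact h y hoy hyx
        obtain ⟨y, hoy, hyx⟩ := hex
        have hye : y = e := by
          by_contra hne
          exact hno ⟨y, ⟨trivial, hne⟩, hoy, hyx⟩
        subst hye
        refine Or.inr ⟨trivial, hyx, ?_⟩
        rintro ⟨z, -, hez, hzx⟩
        exact hno ⟨z, ⟨trivial, fun hz => lt_irrefl y (hz ▸ hez)⟩, hoy.trans hez, hzx⟩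
    · rintro ⟨hx, hxe⟩
      rcases hx with hxo | hxE
      · refine ⟨⟨trivial, hxe⟩, hxo.2.1, ?_⟩
        rintro ⟨y, -, hoy, hyx⟩
        exact hxo.2.2 ⟨y, trivial, hoy, hyx⟩
      · have hex : e < x := hxE.2.1
        refine ⟨⟨trivial, hxe⟩, hoe.trans hex, ?_⟩
        rintro ⟨y, hy, hoy, hyx⟩
        have hyne : y ≠ e := hy.2
        rcases hchain x y e (le_of_lt hyx) (le_of_lt hex) with h | h
        · exact hin.2.2 ⟨y, trivial, hoy, lt_of_le_of_ne h hyne⟩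
        · exact hxE.2.2 ⟨y, trivial, lt_of_le_of_ne h (Ne.symm hyne), hyx⟩
  refine ⟨P₁, P₂, ⟨P₁.edges \ Inps P₁ o, P₁.vert \ {o}⟩, ?_, ?_, ?_, ?_⟩
  · exact ⟨heL, rfl, fun x hx hxv => hxv (htop x hx), rfl, rfl⟩
  · exact ⟨⟨heL, o, hoL, hin⟩, rfl, rfl⟩
  · refine ⟨⟨hoL, hone⟩, rfl, ?_, rfl, rfl⟩
    intro x hx
    rw [hA] at hx
    by_cases hxe : x = e
    · subst hxe
      exact fun hv => hv.2 rfl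
    · exact fun hv => hv.1 (hw x hx hxe)
  · refine ⟨⟨hoL, hone⟩, rfl, ?_, ?_, rfl⟩
    · intro x hx
      rw [hB] at hx
      obtain ⟨hx, hxe⟩ := hx
      rcases hx with hxo | hxE
      · exact fun hv => hv.1 (hw x hxo hxe)
      · exact fun hv => hv.1 (htop x hxE)
    · show P₁.edges \ Inps P₁ o = P₂.edges \ Inps P₂ o
      rw [hA, hB]
      ext x
      simp only [hP₁def, hP₂def, Set.mem_diff, Set.mem_univ, Set.mem_union,
        Set.mem_singleton_iff, true_and]
      constructor
      · rintro ⟨h1, h2⟩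
        exact ⟨fun h => h2 (h ▸ heIo), fun h => h.1.elim h2 h1⟩
      · rintro ⟨h1, h2⟩
        exact ⟨fun h => h2 ⟨Or.inr h, h1⟩, fun h => h2 ⟨Or.inl h, h1⟩⟩
end
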